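/- Let Ω and E be measurable subsets of ℝⁿ with finite positive measure such that |Ω Δ E|/|Ω| ≤ (δ/3)·𝒜(Ω) for some δ ∈ (0,1), where 𝒜 denotes the Fraenkel asymmetry. Then 𝒜(E) ≥ ((3−2δ)/(3+2δ))·𝒜(Ω). -/

import Mathlib

open MeasureTheory Metric Set Filter
open scoped ENNReal NNReal

noncomputable def gagliardoSq (n : ℕ) (s : ℝ) (u : EuclideanSpace ℝ (Fin n) → ℝ) : ℝ≥0∞ :=
  ∫⁻ x, ∫⁻ y, ENNReal.ofReal (|u x - u y| ^ 2 / ‖x - y‖ ^ ((n : ℝ) + 2 * s))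

noncomputable def fracCap (n : ℕ) (s : ℝ) (Ω : Set (EuclideanSpace ℝ (Fin n))) : ℝ≥0∞ :=
  ⨅ u : {u : EuclideanSpace ℝ (Fin n) → ℝ //
      ContDiff ℝ (⊤ : ℕ∞) u ∧ HasCompactSupport u ∧ ∀ x ∈ Ω, 1 ≤ u x},
    gagliardoSq n s (u : EuclideanSpace ℝ (Fin n) → ℝ)

noncomputable def fraenkel (n : ℕ) (Ω : Set (EuclideanSpace ℝ (Fin n))) : ℝ :=
  sInf {a | ∃ (c : EuclideanSpace ℝ (Fin n)) (r : ℝ), 0 < r ∧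
    volume (ball c r) = volume Ω ∧
    a = (volume (symmDiff Ω (ball c r))).toReal / (volume Ω).toReal}

noncomputable def poissonConst (n : ℕ) (s : ℝ) : ℝ :=
  (∫ x : EuclideanSpace ℝ (Fin n), (1 + ‖x‖ ^ 2) ^ (-((n : ℝ) + 2 * s) / 2))⁻¹

noncomputable def fracPoissonKernel (n : ℕ) (s : ℝ) (z : ℝ)
    (x : EuclideanSpace ℝ (Fin n)) : ℝ :=
  poissonConst n s * z ^ (2 * s) / (‖x‖ ^ 2 + z ^ 2) ^ (((n : ℝ) + 2 * s) / 2)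

noncomputable def newtCap (n : ℕ) (Ω : Set (EuclideanSpace ℝ (Fin n))) : ℝ≥0∞ :=
  ⨅ u : {u : EuclideanSpace ℝ (Fin n) → ℝ //
      ContDiff ℝ (⊤ : ℕ∞) u ∧ HasCompactSupport u ∧ ∀ x ∈ Ω, 1 ≤ u x},
    ∫⁻ x, ENNReal.ofReal (‖fderiv ℝ (u : EuclideanSpace ℝ (Fin n) → ℝ) x‖ ^ 2)


lemma exists_ball_volume_eq (n : ℕ) (c : EuclideanSpace ℝ (Fin n))
    (S : Set (EuclideanSpace ℝ (Fin n))) (hS0 : 0 < volume S) (hSfin : volume S < ⊤) :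
    ∃ r : ℝ, 0 < r ∧ volume (ball c r) = volume S := by
  rcases Nat.eq_zero_or_pos n with hn | hn
  · subst hn
    haveI : Subsingleton (EuclideanSpace ℝ (Fin 0)) := by
      constructor; intro a b; ext i; exact absurd i.2 (by simp)
    obtain ⟨x, hx⟩ := nonempty_of_measure_ne_zero hS0.ne'
    refine ⟨1, one_pos, ?_⟩
    have h1 : ball c 1 = S := by
      apply Set.eq_of_subset_of_subset
      · intro y hy; rwa [Subsingleton.elim y x]
      · intro y hy
        simp [Metric.mem_ball, Subsingleton.elim y c]
    rw [h1]
  · set B := volume (ball (0 : EuclideanSpace ℝ (Fin n)) 1) with hB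
    have hBpos : 0 < B := measure_ball_pos _ _ one_pos
    have hBfin : B < ⊤ := measure_ball_lt_top
    have hdiv0 : volume S / B ≠ 0 := by
      simp [ENNReal.div_eq_zero_iff, hS0.ne', hBfin.ne]
    have hdivtop : volume S / B ≠ ⊤ := by
      simp [ENNReal.div_eq_top, hSfin.ne, hBpos.ne']
    set t : ℝ := (volume S / B).toReal with ht
    have htpos : 0 < t := ENNReal.toReal_pos hdiv0 hdivtop
    have hfr : Module.finrank ℝ (EuclideanSpace ℝ (Fin n)) = n := by
      simp [finrank_euclideanSpace]
    haveI : Nontrivial (EuclideanSpace ℝ (Fin n)) :=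
      Module.nontrivial_of_finrank_pos (R := ℝ) (by rw [hfr]; exact hn)
    refine ⟨t ^ ((n : ℝ)⁻¹), Real.rpow_pos_of_pos htpos _, ?_⟩
    rw [Measure.addHaar_ball volume c (le_of_lt (Real.rpow_pos_of_pos htpos _))]
    rw [hfr, Real.rpow_inv_natCast_pow htpos.le hn.ne',
      ENNReal.ofReal_toReal hdivtop, ← hB,
      ENNReal.div_mul_cancel hBpos.ne' hBfin.ne]

lemma fraenkel_nonneg (n : ℕ) (Ω : Set (EuclideanSpace ℝ (Fin n))) : 0 ≤ fraenkel n Ω := by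
  apply Real.sInf_nonneg
  rintro a ⟨c, r, hr, hv, rfl⟩
  positivity

lemma fraenkel_bddBelow (n : ℕ) (Ω : Set (EuclideanSpace ℝ (Fin n))) :
    BddBelow {a | ∃ (c : EuclideanSpace ℝ (Fin n)) (r : ℝ), 0 < r ∧
      volume (ball c r) = volume Ω ∧
      a = (volume (symmDiff Ω (ball c r))).toReal / (volume Ω).toReal} := by
  refine ⟨0, ?_⟩
  rintro a ⟨c, r, hr, hv, rfl⟩
  positivity

lemma subset_union_symmDiff {α : Type*} (s t : Set α) : s ⊆ t ∪ symmDiff s t := by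
  intro x hx
  by_cases hxt : x ∈ t
  · exact Set.mem_union_left _ hxt
  · exact Set.mem_union_right _ (Set.mem_symmDiff.2 (Or.inl ⟨hx, hxt⟩))

lemma measure_le_add_symmDiff {α : Type*} [MeasurableSpace α] (μ : MeasureTheory.Measure α)
    (s t : Set α) : μ s ≤ μ t + μ (symmDiff s t) :=
  le_trans (measure_mono (subset_union_symmDiff s t)) (measure_union_le _ _)

/-- Transfer of Fraenkel asymmetry between nearby sets. -/
theorem asymmetry_transfer (n : ℕ) (Ω E : Set (EuclideanSpace ℝ (Fin n))) (δ : ℝ)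
    (hΩm : MeasurableSet Ω) (hEm : MeasurableSet E)
    (hΩ0 : 0 < volume Ω) (hΩfin : volume Ω < ⊤)
    (hE0 : 0 < volume E) (hEfin : volume E < ⊤)
    (hδ : δ ∈ Ioo (0 : ℝ) 1)
    (h : (volume (symmDiff Ω E)).toReal / (volume Ω).toReal ≤ δ / 3 * fraenkel n Ω) :
    fraenkel n E ≥ (3 - 2 * δ) / (3 + 2 * δ) * fraenkel n Ω := by
  obtain ⟨hδ0, hδ1⟩ := hδ
  set A := fraenkel n Ω with hAdef
  have hA0 : 0 ≤ A := fraenkel_nonneg n Ω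
  set wΩ := (volume Ω).toReal with hwΩdef
  set wE := (volume E).toReal with hwEdef
  have hwΩ : 0 < wΩ := ENNReal.toReal_pos hΩ0.ne' hΩfin.ne
  have hwE : 0 < wE := ENNReal.toReal_pos hE0.ne' hEfin.ne
  set d := (volume (symmDiff Ω E)).toReal with hddef
  have hdOEfin : volume (symmDiff Ω E) < ⊤ :=
    lt_of_le_of_lt (measure_mono symmDiff_subset_union)
      (lt_of_le_of_lt (measure_union_le _ _) (by simp [ENNReal.add_lt_top, hΩfin, hEfin]))
  -- A ≤ 2
  have hA2 : A ≤ 2 := by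
    obtain ⟨r, hr, hv⟩ := exists_ball_volume_eq n (0 : EuclideanSpace ℝ (Fin n)) Ω hΩ0 hΩfin
    have hle : A ≤ (volume (symmDiff Ω (ball (0 : EuclideanSpace ℝ (Fin n)) r))).toReal / wΩ :=
      csInf_le (fraenkel_bddBelow n Ω) ⟨0, r, hr, hv, rfl⟩
    have hsd : volume (symmDiff Ω (ball (0 : EuclideanSpace ℝ (Fin n)) r)) ≤
        volume Ω + volume (ball (0 : EuclideanSpace ℝ (Fin n)) r) :=
      le_trans (measure_mono symmDiff_subset_union) (measure_union_le _ _)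
    rw [hv] at hsd
    have h2 : (volume (symmDiff Ω (ball 0 r))).toReal ≤ 2 * wΩ := by
      have h3 := (ENNReal.toReal_le_toReal
        (ne_of_lt (lt_of_le_of_lt hsd (by simp [ENNReal.add_lt_top, hΩfin])))
        (by simp [ENNReal.add_lt_top, hΩfin.ne] : volume Ω + volume Ω ≠ ⊤)).mpr hsd
      rw [ENNReal.toReal_add hΩfin.ne hΩfin.ne] at h3
      rw [← hwΩdef] at h3
      linarith
    calc A ≤ (volume (symmDiff Ω (ball (0 : EuclideanSpace ℝ (Fin n)) r))).toReal / wΩ := hle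
      _ ≤ 2 * wΩ / wΩ := by gcongr
      _ = 2 := by field_simp
  have hd : d ≤ δ / 3 * A * wΩ := by
    rw [div_le_iff₀ hwΩ] at h
    linarith [h]
  have hdnn : 0 ≤ d := ENNReal.toReal_nonneg
  have hwEle : wE ≤ wΩ + d := by
    have h1 : volume E ≤ volume Ω + volume (symmDiff Ω E) := by
      refine le_trans (measure_le_add_symmDiff volume E Ω) ?_
      rw [symmDiff_comm]
    have h2 := (ENNReal.toReal_le_toReal hEfin.ne
      (by simp [ENNReal.add_lt_top, hΩfin.ne, hdOEfin.ne] :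
        volume Ω + volume (symmDiff Ω E) ≠ ⊤)).mpr h1
    rwa [ENNReal.toReal_add hΩfin.ne hdOEfin.ne] at h2
  rw [ge_iff_le, fraenkel]
  apply le_csInf
  · obtain ⟨r, hr, hv⟩ := exists_ball_volume_eq n (0 : EuclideanSpace ℝ (Fin n)) E hE0 hEfin
    exact ⟨_, 0, r, hr, hv, rfl⟩
  rintro a ⟨c, r, hr, hvB, rfl⟩
  obtain ⟨r', hr', hvB'⟩ := exists_ball_volume_eq n c Ω hΩ0 hΩfin
  have hAle : A ≤ (volume (symmDiff Ω (ball c r'))).toReal / wΩ :=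
    csInf_le (fraenkel_bddBelow n Ω) ⟨c, r', hr', hvB', rfl⟩
  -- symmDiff of the two concentric balls
  have hballs : volume (symmDiff (ball c r) (ball c r')) ≤ volume (symmDiff Ω E) := by
    rcases le_total r r' with hrr | hrr
    · have hsub : ball c r ⊆ ball c r' := ball_subset_ball hrr
      have heq : symmDiff (ball c r) (ball c r') = ball c r' \ ball c r :=
        symmDiff_of_le hsub
      rw [heq, measure_diff hsub measurableSet_ball.nullMeasurableSet
        (by rw [hvB]; exact hEfin.ne), hvB, hvB']
      rw [tsub_le_iff_right, add_comm]
      exact measure_le_add_symmDiff volume Ω E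
    · have hsub : ball c r' ⊆ ball c r := ball_subset_ball hrr
      have heq : symmDiff (ball c r) (ball c r') = ball c r \ ball c r' :=
        symmDiff_of_ge hsub
      rw [heq, measure_diff hsub measurableSet_ball.nullMeasurableSet
        (by rw [hvB']; exact hΩfin.ne), hvB, hvB']
      rw [tsub_le_iff_right, add_comm]
      refine le_trans (measure_le_add_symmDiff volume E Ω) ?_
      rw [symmDiff_comm]
  -- triangle inequality
  have htri : volume (symmDiff Ω (ball c r')) ≤
      volume (symmDiff Ω E) + volume (symmDiff E (ball c r)) + volume (symmDiff Ω E) := by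
    have hsub : symmDiff Ω (ball c r') ⊆
        (symmDiff Ω E ∪ symmDiff E (ball c r)) ∪ symmDiff (ball c r) (ball c r') := by
      refine le_trans (symmDiff_triangle Ω (ball c r) (ball c r')) ?_
      exact Set.union_subset_union_left _ (symmDiff_triangle Ω E (ball c r))
    refine le_trans (measure_mono hsub) ?_
    refine le_trans (measure_union_le _ _) ?_
    exact add_le_add (measure_union_le _ _) hballs
  have hEBfin : volume (symmDiff E (ball c r)) < ⊤ := by
    refine lt_of_le_of_lt (measure_mono symmDiff_subset_union) ?_
    refine lt_of_le_of_lt (measure_union_le _ _) ?_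
    rw [hvB]
    simp [ENNReal.add_lt_top, hEfin]
  set x := (volume (symmDiff E (ball c r))).toReal with hxdef
  have hxnn : 0 ≤ x := ENNReal.toReal_nonneg
  have hRHSfin : volume (symmDiff Ω E) + volume (symmDiff E (ball c r))
      + volume (symmDiff Ω E) ≠ ⊤ := by
    simp [ENNReal.add_lt_top, hdOEfin.ne, hEBfin.ne]
  have htriR : (volume (symmDiff Ω (ball c r'))).toReal ≤ d + x + d := by
    have h4 := (ENNReal.toReal_le_toReal
      (ne_of_lt (lt_of_le_of_lt htri (lt_top_iff_ne_top.2 hRHSfin))) hRHSfin).mpr htri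
    rwa [ENNReal.toReal_add (by simp [ENNReal.add_lt_top, hdOEfin.ne, hEBfin.ne] :
        volume (symmDiff Ω E) + volume (symmDiff E (ball c r)) ≠ ⊤) hdOEfin.ne,
      ENNReal.toReal_add hdOEfin.ne hEBfin.ne] at h4
  have hAwΩ : A * wΩ ≤ d + x + d := by
    rw [le_div_iff₀ hwΩ] at hAle
    linarith
  have hx1 : A * wΩ * (3 - 2 * δ) / 3 ≤ x := by nlinarith [hd, hAwΩ]
  have hwE2 : wE ≤ wΩ * (3 + 2 * δ) / 3 := by
    nlinarith [mul_nonneg (mul_nonneg hδ0.le hwΩ.le) (by linarith : (0:ℝ) ≤ 2 - A)]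
  have hc : 0 ≤ (3 - 2 * δ) / (3 + 2 * δ) * A := by
    apply mul_nonneg _ hA0
    apply div_nonneg <;> linarith
  rw [le_div_iff₀ hwE]
  calc (3 - 2 * δ) / (3 + 2 * δ) * A * wE
      ≤ (3 - 2 * δ) / (3 + 2 * δ) * A * (wΩ * (3 + 2 * δ) / 3) :=
        mul_le_mul_of_nonneg_left hwE2 hc
    _ = A * wΩ * (3 - 2 * δ) / 3 := by
        field_simp
    _ ≤ x := hx1
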